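/- Let n ≥ m and let A_1, …, A_L be real symmetric m×m matrices. The family {A_1,…,A_L} is D_{m,n}-SD if and only if there exist real symmetric n×n matrices S_1, …, S_L such that the family {S_1,…,S_L} is SD and, for every 1 ≤ i ≤ L, the top-left m×m submatrix of S_i equals A_i. -/

import Mathlib

open Matrix

/-- Simultaneously diagonalizable on `SL_n(ℝ)`. -/
def IsSD {ι : Type*} {n : ℕ} (S : ι → Matrix (Fin n) (Fin n) ℝ) : Prop :=
  ∃ P : Matrix (Fin n) (Fin n) ℝ, P.det = 1 ∧ ∀ i, (Pᵀ * S i * P).IsDiag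

/-!
If `P` has full column rank it is the first `m` columns of an invertible `E`, and then
`Pᵀ D P` is the top-left corner of `Eᵀ D E`; the latter is diagonalized by `E⁻¹`, corrected by a
diagonal factor of determinant `det E` to land in `SL_n`. Conversely, if `Qᵀ S Q = D` is diagonal
then `S = Q⁻ᵀ D Q⁻¹`, so the corner of `S` is `Pᵀ D P` where `P` consists of the first `m` columns
of `Q⁻¹`. These have full rank, so `det (Pᵀ P) > 0`, and rescaling `P` (and `D` inversely) makes
this determinant `1`.
-/

theorem exists_linearIndependent_extend_castLE {K V : Type*} [DivisionRing K]
    [AddCommGroup V] [Module K V] {m n : ℕ} (hmn : m ≤ n) (hn : n ≤ Module.finrank K V)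
    {v : Fin m → V} (hv : LinearIndependent K v) :
    ∃ w : Fin n → V, LinearIndependent K w ∧ ∀ j, w (Fin.castLE hmn j) = v j := by
  induction n, hmn using Nat.le_induction with
  | base => exact ⟨v, hv, fun j => by simp⟩
  | succ n hmn ih =>
    obtain ⟨w, hw, hwv⟩ := ih (by omega)
    obtain ⟨x, hx⟩ := exists_linearIndependent_snoc_of_lt_finrank hw hn
    exact ⟨Fin.snoc w x, hx, fun j =>
      (Fin.snoc_castSucc (α := fun _ => V) x w (Fin.castLE hmn j)).trans (hwv j)⟩

namespace Matrix

theorem exists_isUnit_submatrix_castLE_eq {K : Type*} [Field K] {m n : ℕ} (hmn : m ≤ n)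
    {P : Matrix (Fin n) (Fin m) K} (hP : Function.Injective P.mulVec) :
    ∃ E : Matrix (Fin n) (Fin n) K, IsUnit E ∧ E.submatrix id (Fin.castLE hmn) = P := by
  obtain ⟨w, hw, hwP⟩ := exists_linearIndependent_extend_castLE hmn (by simp)
    (mulVec_injective_iff.mp hP)
  refine ⟨(of w)ᵀ, linearIndependent_cols_iff_isUnit.mp hw, ?_⟩
  ext i j
  simp [hwP, col]

theorem mulVec_injective_of_isUnit_det_transpose_mul_self {R ι κ : Type*} [CommRing R]
    [Fintype ι] [Fintype κ] [DecidableEq κ] {P : Matrix ι κ R} (h : IsUnit (Pᵀ * P).det) :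
    Function.Injective P.mulVec := by
  refine .of_comp (f := Pᵀ.mulVec) ?_
  simpa only [Function.comp_def, mulVec_mulVec] using
    mulVec_injective_of_isUnit ((isUnit_iff_isUnit_det _).mpr h)

theorem IsSymm.transpose_mul_mul {R n m : Type*} [CommSemiring R] [Fintype n] {D : Matrix n n R}
    (hD : D.IsSymm) (E : Matrix n m R) : (Eᵀ * D * E).IsSymm := by
  rw [IsSymm, transpose_mul, transpose_mul, transpose_transpose, hD.eq, Matrix.mul_assoc]

theorem submatrix_transpose_mul_mul {R n k m : Type*} [CommSemiring R] [Fintype n] [Fintype k]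
    (X : Matrix n k R) (D : Matrix n n R) (f : m → k) :
    (Xᵀ * D * X).submatrix f f = (X.submatrix id f)ᵀ * D * X.submatrix id f := by
  ext i j
  simp [mul_apply]

theorem exists_det_diagonal_eq {R : Type*} [CommRing R] :
    ∀ {n : ℕ} (E : Matrix (Fin n) (Fin n) R), ∃ g : Fin n → R, (diagonal g).det = E.det
  | 0, E => ⟨0, by simp⟩
  | _ + 1, E => ⟨Fin.cons E.det 1, by simp [Fin.prod_cons]⟩

end Matrix

theorem isSD_transpose_mul_mul {ι : Type*} {n : ℕ} {E : Matrix (Fin n) (Fin n) ℝ} (hE : IsUnit E)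
    {D : ι → Matrix (Fin n) (Fin n) ℝ} (hD : ∀ i, (D i).IsDiag) : IsSD fun i => Eᵀ * D i * E := by
  obtain ⟨g, hg⟩ := exists_det_diagonal_eq E
  have hEdet : IsUnit E.det := (isUnit_iff_isUnit_det E).mp hE
  have hEtdet : IsUnit Eᵀ.det := by rwa [det_transpose]
  refine ⟨E⁻¹ * diagonal g, ?_, fun i => ?_⟩
  · rw [det_mul, det_nonsing_inv, hg, Ring.inverse_mul_cancel _ hEdet]
  · rw [transpose_mul, diagonal_transpose, transpose_nonsing_inv]
    simp only [Matrix.mul_assoc]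
    rw [mul_nonsing_inv_cancel_left _ _ hEdet, nonsing_inv_mul_cancel_left _ _ hEtdet,
      ← (hD i).diagonal_diag, diagonal_mul_diagonal, diagonal_mul_diagonal]
    exact isDiag_diagonal _

theorem exists_det_transpose_mul_self_eq_one_of_injective {ι κ L : Type*} [Fintype ι] [Fintype κ]
    [DecidableEq κ] {P₀ : Matrix ι κ ℝ} (hP₀ : Function.Injective P₀.mulVec)
    {D₀ : L → Matrix ι ι ℝ} (hD₀ : ∀ i, (D₀ i).IsDiag) :
    ∃ P : Matrix ι κ ℝ, (Pᵀ * P).det = 1 ∧ ∃ D : L → Matrix ι ι ℝ,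
      (∀ i, (D i).IsDiag) ∧ ∀ i, P₀ᵀ * D₀ i * P₀ = Pᵀ * D i * P := by
  have hpos : 0 < (P₀ᵀ * P₀).det := by
    simpa using (PosDef.conjTranspose_mul_self P₀ hP₀).det_pos
  rcases isEmpty_or_nonempty κ with hκ | hκ
  · exact ⟨P₀, by simp, D₀, hD₀, fun i => rfl⟩
  set t := ((P₀ᵀ * P₀).det)⁻¹ ^ ((Fintype.card κ : ℝ)⁻¹)
  have ht : 0 < t := by positivity
  have htpow : t ^ Fintype.card κ = ((P₀ᵀ * P₀).det)⁻¹ :=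
    Real.rpow_inv_natCast_pow (by positivity) Fintype.card_ne_zero
  refine ⟨√t • P₀, ?_, fun i => t⁻¹ • D₀ i, fun i => (hD₀ i).smul _, fun i => ?_⟩
  · simp only [transpose_smul, smul_mul, Matrix.mul_smul, smul_smul]
    rw [Real.mul_self_sqrt ht.le, det_smul, htpow, inv_mul_cancel₀ hpos.ne']
  · simp only [transpose_smul, smul_mul, Matrix.mul_smul, smul_smul]
    rw [show √t * (t⁻¹ * √t) = 1 by
      rw [mul_left_comm, Real.mul_self_sqrt ht.le, inv_mul_cancel₀ ht.ne'], one_smul]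

theorem stmt_15_general (m n L : ℕ) (hmn : m ≤ n)
    (A : Fin L → Matrix (Fin m) (Fin m) ℝ) :
    (∃ P : Matrix (Fin n) (Fin m) ℝ, (Pᵀ * P).det = 1 ∧
      ∃ D : Fin L → Matrix (Fin n) (Fin n) ℝ,
        (∀ i, (D i).IsDiag) ∧ ∀ i, A i = Pᵀ * D i * P) ↔
    (∃ S : Fin L → Matrix (Fin n) (Fin n) ℝ, (∀ i, (S i).IsSymm) ∧ IsSD S ∧
      ∀ i, (S i).submatrix (Fin.castLE hmn) (Fin.castLE hmn) = A i) := by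
  constructor
  · rintro ⟨P, hP, D, hD, hA⟩
    obtain ⟨E, hE, rfl⟩ := exists_isUnit_submatrix_castLE_eq hmn (P := P)
      (mulVec_injective_of_isUnit_det_transpose_mul_self (by simp [hP]))
    exact ⟨fun i => Eᵀ * D i * E, fun i => (hD i).isSymm.transpose_mul_mul E,
      isSD_transpose_mul_mul hE hD, fun i => by rw [submatrix_transpose_mul_mul, hA]⟩
  · rintro ⟨S, -, ⟨Q, hQ, hQS⟩, hSA⟩
    have hQdet : IsUnit Q.det := by simp [hQ]
    have hQtdet : IsUnit Qᵀ.det := by rwa [det_transpose]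
    have hS : ∀ i, S i = (Q⁻¹)ᵀ * (Qᵀ * S i * Q) * Q⁻¹ := fun i => by
      rw [transpose_nonsing_inv]
      simp only [← Matrix.mul_assoc, nonsing_inv_mul _ hQtdet, one_mul]
      rw [Matrix.mul_assoc, mul_nonsing_inv _ hQdet, mul_one]
    have hQinv : IsUnit Q⁻¹ := (isUnit_iff_isUnit_det _).mpr (isUnit_nonsing_inv_det _ hQdet)
    have hP₀ : Function.Injective (Q⁻¹.submatrix id (Fin.castLE hmn)).mulVec :=
      mulVec_injective_iff.mpr
        ((linearIndependent_cols_of_isUnit hQinv).comp _ (Fin.castLE_injective hmn))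
    obtain ⟨P, hP, D, hD, hPD⟩ := exists_det_transpose_mul_self_eq_one_of_injective hP₀ hQS
    exact ⟨P, hP, D, hD, fun i => by rw [← hSA i, hS i, submatrix_transpose_mul_mul, hPD]⟩

theorem stmt_15 (m n L : ℕ) (hmn : m ≤ n)
    (A : Fin L → Matrix (Fin m) (Fin m) ℝ) (hA : ∀ i, (A i).IsSymm) :
    (∃ P : Matrix (Fin n) (Fin m) ℝ, (Pᵀ * P).det = 1 ∧
      ∃ D : Fin L → Matrix (Fin n) (Fin n) ℝ,
        (∀ i, (D i).IsDiag) ∧ ∀ i, A i = Pᵀ * D i * P) ↔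
    (∃ S : Fin L → Matrix (Fin n) (Fin n) ℝ, (∀ i, (S i).IsSymm) ∧ IsSD S ∧
      ∀ i, (S i).submatrix (Fin.castLE hmn) (Fin.castLE hmn) = A i) :=
  stmt_15_general m n L hmn A
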